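/- Fix heights i₁ ≤ i₂ and j, and let T_{i,j} denote the succinct tree whose leaves are j-tuples of binary strings with at most i bits. Let ν₁ : V → L(T_{i₁,j}) ∪ {⊤} and ν₂ : V → L(T_{i₂,j}) ∪ {⊤} be node labelings with ν₁(u) = ν₂(u)^{i₂−i₁} for all u (where ξ^κ deletes κ leading zeroes from the first component of ξ, and equals ⊤ if the first component has fewer than κ leading zeroes, with ⊤^κ = ⊤). Then for any arc vw with π(v) < 2j, drop(ν₁, vw) = drop(ν₂, vw)^{i₂−i₁}. -/

import Mathlib

/-- Binary strings. -/
abbrev BStr := List Bool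

/-- Tuples of binary strings (labels are `j`-tuples). -/
abbrev Tup := List BStr

/-- The order on binary strings: `0s < ε < 1s'` and `bs < bs' ↔ s < s'`. -/
def slt : BStr → BStr → Prop
  | [], [] => False
  | false :: _, [] => True
  | true :: _, [] => False
  | [], true :: _ => True
  | [], false :: _ => False
  | false :: _, true :: _ => True
  | true :: _, false :: _ => False
  | false :: s, false :: t => slt s t
  | true :: s, true :: t => slt s t

/-- Lexicographic order on tuples of binary strings. -/
def tlt (x y : Tup) : Prop := List.Lex slt x y

/-- Strict order on `L(T) ∪ {⊤}`, with `⊤` (encoded as `none`) on top. -/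
def wlt : Option Tup → Option Tup → Prop
  | some x, some y => tlt x y
  | some _, none => True
  | none, _ => False

/-- Non-strict order on `L(T) ∪ {⊤}`. -/
def wle (x y : Option Tup) : Prop := x = y ∨ wlt x y

/-- `p`-truncation of a label from a tree of height `j`: keep the first `j - p/2`
components; `⊤|_p = ⊤`. -/
def trunc (j p : ℕ) (x : Option Tup) : Option Tup := x.map (List.take (j - p / 2))

/-- Non-violation of an arc with tail priority `p`, tail label `x` and head label `y`
(height-`j` trees): even `p`: `x|_p ≥ y|_p`; odd `p`: `x|_p > y|_p` or both `⊤`. -/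
def NV (j p : ℕ) (x y : Option Tup) : Prop :=
  if Even p then wle (trunc j p y) (trunc j p x)
  else wlt (trunc j p y) (trunc j p x) ∨ (x = none ∧ y = none)

/-- The tail value `x` makes the arc (with head label `y`) *not loose* within the value
domain `D`: either the arc is violated, or `x` is the least value of `D` making the arc
non-violated. -/
def NotLoose (D : Set (Option Tup)) (j p : ℕ) (x y : Option Tup) : Prop :=
  ¬ NV j p x y ∨ ∀ x' ∈ D, wlt x' x → ¬ NV j p x' y

/-- Leaves of the succinct tree `T_{i,j}`: `j`-tuples of binary strings with at most `i`
bits in total. -/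
def LeafSet (i j : ℕ) : Set Tup := {ξ | ξ.length = j ∧ (ξ.map List.length).sum ≤ i}

/-- The value domain `L(T_{i,j}) ∪ {⊤}`. -/
def Dom (i j : ℕ) : Set (Option Tup) := insert none (some '' LeafSet i j)

/-- `ζ(ξ)`: the number of leading zeroes of the first component of `ξ`. -/
def zcount (ξ : Tup) : ℕ := (ξ.headI.takeWhile (fun b => b = false)).length

/-- `ξ^κ`: delete `κ` leading zeroes from the first component of `ξ`; if the first
component has fewer than `κ` leading zeroes the result is `⊤`; and `⊤^κ = ⊤`. -/
def strip (κ : ℕ) : Option Tup → Option Tup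
  | none => none
  | some ξ => if κ ≤ zcount ξ then some (ξ.modifyHead (List.drop κ)) else none

/-- `dval = drop(ν, vw)` over the domain `D i j`: the greatest element `x ≤ ν v` of the
domain such that the arc `vw` is not loose after setting the label of `v` to `x`. -/
def IsDrop (i j p : ℕ) (νv νw dval : Option Tup) : Prop :=
  dval ∈ Dom i j ∧ wle dval νv ∧ NotLoose (Dom i j) j p dval νw ∧
    ∀ x ∈ Dom i j, wle x νv → NotLoose (Dom i j) j p x νw → wle x dval

/-!
Write `σ = strip κ` and `υ = unstrip κ` for deleting, resp. prepending, `κ` leading zeroes of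
the first component. On labels other than the degenerate `some []`, `σ` is lower adjoint to `υ`
(`σ b ≤ a ↔ b ≤ υ a`), and non-violation transfers along the pair:
`NV x (σ y) ↔ NV (υ x) y`, because truncation commutes with both maps.
Since `⊤` is never violated, a finite domain has a least non-violating label `m`, and the arc is
not loose exactly when the tail label is `≤ m`; hence `drop(ν, vw) = min (ν v) m`.
The adjunction sends the least non-violating label of `T_{i₂,j}` to that of `T_{i₁,j}`, and the
monotone map `σ` commutes with `min`.
-/

section OrderLemmas

variable {α β : Type*}

theorem IsLeast.map_of_adjointOn [Preorder α] [Preorder β] {D : Set α} {E : Set β}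
    {P : α → Prop} {Q : β → Prop} {f : β → α} {g : α → β} {m : β}
    (hm : IsLeast {b | b ∈ E ∧ Q b} m)
    (hf : ∀ b ∈ E, f b ∈ D) (hg : ∀ a ∈ D, g a ∈ E)
    (hfg : ∀ b ∈ E, ∀ a, f b ≤ a ↔ b ≤ g a) (hPQ : ∀ a, P a ↔ Q (g a))
    (hQ : IsUpperSet {b | Q b}) : IsLeast {a | a ∈ D ∧ P a} (f m) :=
  ⟨⟨hf m hm.1.1, (hPQ _).2 (hQ ((hfg m hm.1.1 _).1 le_rfl) hm.1.2)⟩,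
    fun a ⟨ha, hPa⟩ => (hfg m hm.1.1 a).2 (hm.2 ⟨hg a ha, (hPQ a).1 hPa⟩)⟩

theorem forall_lt_not_iff_le_of_isLeast [LinearOrder α] {D : Set α} {P : α → Prop} {m x : α}
    (hm : IsLeast {x | x ∈ D ∧ P x} m) : (∀ y ∈ D, y < x → ¬ P y) ↔ x ≤ m :=
  ⟨fun h => not_lt.1 fun hmx => h m hm.1.1 hmx hm.1.2,
    fun h _ hy hyx hPy => (hyx.trans_le h).not_ge (hm.2 ⟨hy, hPy⟩)⟩

theorem isGreatest_min [LinearOrder α] {D : Set α} {a b : α} (ha : a ∈ D) (hb : b ∈ D) :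
    IsGreatest {x | x ∈ D ∧ x ≤ a ∧ x ≤ b} (min a b) :=
  ⟨⟨by rcases min_choice a b with h | h <;> rwa [h], min_le_left a b, min_le_right a b⟩,
    fun _ ⟨_, hxa, hxb⟩ => le_min hxa hxb⟩

end OrderLemmas

theorem List.Lex.take_eq_or_lex {γ : Type*} {r : γ → γ → Prop} {l₁ l₂ : List γ}
    (h : List.Lex r l₁ l₂) (n : ℕ) :
    l₁.take n = l₂.take n ∨ List.Lex r (l₁.take n) (l₂.take n) := by
  induction h generalizing n with
  | nil => cases n <;> simp
  | cons _ ih =>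
    cases n with
    | zero => simp
    | succ n => exact (ih n).imp (by simp [·]) .cons
  | rel h => cases n <;> simp [List.Lex.rel h]

/-- Reading `0 ↦ 0`, `1 ↦ 2` and appending the end marker `1` turns `slt` into the
lexicographic order on `List ℕ`. -/
def bitCode (s : BStr) : List ℕ := s.map (cond · 2 0) ++ [1]

theorem bitCode_injective : Function.Injective bitCode := fun s t h =>
  List.map_injective_iff.2 (by decide) (List.append_cancel_right h)

theorem slt_iff_lex_bitCode :
    ∀ s t : BStr, slt s t ↔ List.Lex (· < ·) (bitCode s) (bitCode t)
  | [], [] => by simp [slt, bitCode]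
  | b :: s, [] => by cases b <;> simp [slt, bitCode, List.cons_lex_cons_iff]
  | [], c :: t => by cases c <;> simp [slt, bitCode, List.cons_lex_cons_iff]
  | b :: s, c :: t => by
    cases b <;> cases c <;> simp [slt, bitCode, List.cons_lex_cons_iff, slt_iff_lex_bitCode s t]

instance : IsStrictTotalOrder BStr slt where
  trichotomous s t hst hts := bitCode_injective <| trichotomous_of (List.Lex (· < ·)) _ _
    |>.resolve_left (mt (slt_iff_lex_bitCode s t).2 hst)
    |>.resolve_right (mt (slt_iff_lex_bitCode t s).2 hts)
  irrefl s h := irrefl_of (List.Lex (· < ·)) _ ((slt_iff_lex_bitCode s s).1 h)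
  trans s t u hst htu := (slt_iff_lex_bitCode s u).2 <|
    List.lex_trans lt_trans ((slt_iff_lex_bitCode s t).1 hst) ((slt_iff_lex_bitCode t u).1 htu)

instance : IsStrictTotalOrder (Option Tup) wlt where
  trichotomous
    | some ξ, some η, h₁, h₂ =>
      congrArg some <|
        trichotomous_of (List.Lex slt) ξ η |>.resolve_left h₁ |>.resolve_right h₂
    | none, none, _, _ => rfl
    | some _, none, h, _ => absurd trivial h
    | none, some _, _, h => absurd trivial h
  irrefl
    | some ξ, h => irrefl_of (List.Lex slt) ξ h
    | none, h => h
  trans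
    | some _, some _, some _, h₁, h₂ => List.lex_trans (trans_of slt) h₁ h₂
    | some _, some _, none, _, _ => trivial
    | _, none, some _, _, h => h.elim
    | none, _, _, h, _ => h.elim
    | some _, none, none, _, h => h.elim

/-- `L(T) ∪ {⊤}` ordered by `wle`; a type synonym, since core already orders `Option`
differently. -/
def Label : Type := Option Tup

noncomputable instance : LinearOrder Label :=
  @linearOrderOfSTO Label wlt (inferInstanceAs (IsStrictTotalOrder (Option Tup) wlt))
    (Classical.decRel _)

theorem wle_refl (x : Option Tup) : wle x x := le_refl (α := Label) x

theorem wle_trans {x y z : Option Tup} : wle x y → wle y z → wle x z := le_trans (α := Label)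

theorem wle_of_wlt {x y : Option Tup} : wlt x y → wle x y := le_of_lt (α := Label)

theorem wlt_of_wlt_of_wle {x y z : Option Tup} : wlt x y → wle y z → wlt x z :=
  lt_of_lt_of_le (α := Label)

theorem not_wle {x y : Option Tup} : ¬ wle x y ↔ wlt y x := not_le (α := Label)

theorem not_wlt {x y : Option Tup} : ¬ wlt x y ↔ wle y x := not_lt (α := Label)

theorem wle_none (x : Option Tup) : wle x none := by
  cases x
  · exact wle_refl _
  · exact wle_of_wlt trivial

theorem eq_none_of_none_wle {x : Option Tup} (h : wle none x) : x = none :=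
  h.resolve_right id |>.symm

def leadingZeros (s : BStr) : ℕ := (s.takeWhile (· = false)).length

@[simp] theorem leadingZeros_false_cons (s : BStr) :
    leadingZeros (false :: s) = leadingZeros s + 1 := by
  simp [leadingZeros]

theorem zcount_cons (s : BStr) (ξ : Tup) : zcount (s :: ξ) = leadingZeros s := rfl

theorem leadingZeros_le_length (s : BStr) : leadingZeros s ≤ s.length :=
  (List.takeWhile_sublist _).length_le

theorem leadingZeros_replicate_append (κ : ℕ) (s : BStr) :
    leadingZeros (List.replicate κ false ++ s) = κ + leadingZeros s := by
  induction κ with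
  | zero => simp
  | succ κ ih => simp [List.replicate_succ, ih]; omega

theorem replicate_append_drop {κ : ℕ} {s : BStr} (h : κ ≤ leadingZeros s) :
    List.replicate κ false ++ s.drop κ = s := by
  induction κ generalizing s with
  | zero => simp
  | succ κ ih =>
    match s, h with
    | false :: s, h => simp [List.replicate_succ, ih (by simpa using h)]

theorem slt_of_leadingZeros_lt : ∀ {s t : BStr}, leadingZeros t < leadingZeros s → slt s t
  | false :: _, [], _ | false :: _, true :: _, _ => trivial
  | false :: s, false :: t, h => slt_of_leadingZeros_lt (s := s) (t := t) (by simpa using h)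

theorem slt_replicate_append_iff (κ : ℕ) (s t : BStr) :
    slt (List.replicate κ false ++ s) (List.replicate κ false ++ t) ↔ slt s t := by
  induction κ with
  | zero => rfl
  | succ κ ih => simpa [List.replicate_succ, slt] using ih

def unstrip (κ : ℕ) : Option Tup → Option Tup :=
  Option.map (List.modifyHead (List.replicate κ false ++ ·))

theorem tlt_modifyHead_replicate_append_iff (κ : ℕ) :
    ∀ ξ η : Tup, tlt (ξ.modifyHead (List.replicate κ false ++ ·))
      (η.modifyHead (List.replicate κ false ++ ·)) ↔ tlt ξ η
  | [], [] | [], _ :: _ | _ :: _, [] => by simp [tlt]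
  | s :: ξ, t :: η => by
    simp only [tlt, List.modifyHead_cons, List.cons_lex_cons_iff, slt_replicate_append_iff,
      List.append_cancel_left_eq]

theorem wlt_unstrip_iff {κ : ℕ} : ∀ {x y : Option Tup},
    wlt (unstrip κ x) (unstrip κ y) ↔ wlt x y
  | some ξ, some η => tlt_modifyHead_replicate_append_iff κ ξ η
  | none, _ | some _, none => Iff.rfl

theorem wle_unstrip_iff {κ : ℕ} {x y : Option Tup} :
    wle (unstrip κ x) (unstrip κ y) ↔ wle x y := by
  rw [← not_iff_not, not_wle, not_wle, wlt_unstrip_iff]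

theorem unstrip_wlt_of_zcount_lt {κ : ℕ} (ξ : Tup) {η : Tup} (hη : η ≠ [])
    (h : zcount η < κ) : wlt (unstrip κ (some ξ)) (some η) := by
  match ξ, η, hη with
  | [], _ :: _, _ => exact List.Lex.nil
  | s :: _, t :: _, _ =>
    refine List.Lex.rel (slt_of_leadingZeros_lt ?_)
    rw [zcount_cons] at h
    rw [leadingZeros_replicate_append]
    omega

theorem unstrip_strip {κ : ℕ} {x : Option Tup} {η : Tup} (h : strip κ x = some η) :
    unstrip κ (some η) = x := by
  match x with
  | some ξ =>
    simp only [strip] at h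
    split_ifs at h with hκ
    cases h
    match ξ with
    | [] => obtain rfl : κ = 0 := Nat.le_zero.1 hκ; rfl
    | s :: ξ => simp [unstrip, replicate_append_drop (zcount_cons s ξ ▸ hκ)]

theorem strip_cases {κ : ℕ} {b : Option Tup} (hb : b ≠ some []) :
    (strip κ b = none ∧ ∀ ξ, wlt (unstrip κ (some ξ)) b) ∨
      ∃ η, strip κ b = some η ∧ b = unstrip κ (some η) := by
  rcases hσ : strip κ b with _ | η
  · refine Or.inl ⟨rfl, fun ξ => ?_⟩
    match b with
    | none => trivial
    | some β =>
      have hβ : β ≠ [] := fun h => hb (congrArg some h)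
      have hz : zcount β < κ := by
        by_contra hz
        simp [strip, not_lt.1 hz] at hσ
      exact unstrip_wlt_of_zcount_lt ξ hβ hz
  · exact Or.inr ⟨η, rfl, (unstrip_strip hσ).symm⟩

theorem strip_wle_iff {κ : ℕ} {b : Option Tup} (hb : b ≠ some []) (a : Option Tup) :
    wle (strip κ b) a ↔ wle b (unstrip κ a) := by
  rcases strip_cases (κ := κ) hb with ⟨hσ, hlow⟩ | ⟨η, hσ, rfl⟩
  · rw [hσ]
    cases a with
    | none => exact iff_of_true (wle_refl _) (wle_none _)
    | some α => exact iff_of_false (fun h => by cases eq_none_of_none_wle h) (not_wle.2 (hlow α))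
  · rw [hσ, wle_unstrip_iff]

theorem strip_wlt_iff {κ : ℕ} {b : Option Tup} (hb : b ≠ some []) (ξ : Tup) :
    wlt (strip κ b) (some ξ) ↔ wlt b (unstrip κ (some ξ)) := by
  rcases strip_cases (κ := κ) hb with ⟨hσ, hlow⟩ | ⟨η, hσ, rfl⟩
  · rw [hσ]
    exact iff_of_false id (not_wlt.2 (wle_of_wlt (hlow ξ)))
  · rw [hσ, wlt_unstrip_iff]

theorem strip_monotoneOn (κ : ℕ) :
    MonotoneOn (α := Label) (β := Label) (strip κ) {b | b ≠ some []} :=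
  fun _ hb _ hb' h =>
    (strip_wle_iff hb _).2 (wle_trans h ((strip_wle_iff hb' _).1 (wle_refl _)))

theorem trunc_mono {j p : ℕ} {x y : Option Tup} (h : wle x y) :
    wle (trunc j p x) (trunc j p y) := by
  match x, y, h with
  | _, _, .inl rfl => exact wle_refl _
  | some _, none, _ => exact wle_none _
  | some ξ, some η, .inr h =>
    exact (h.take_eq_or_lex _).imp (congrArg some) id

theorem trunc_strip {j p : ℕ} (hn : 0 < j - p / 2) (κ : ℕ) (x : Option Tup) :
    trunc j p (strip κ x) = strip κ (trunc j p x) := by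
  match x with
  | none => rfl
  | some ξ =>
    have hz : zcount (ξ.take (j - p / 2)) = zcount ξ := by
      obtain ⟨n, hn⟩ := Nat.exists_eq_add_of_lt hn
      cases ξ <;> simp [hn, zcount]
    simp only [trunc, strip, Option.map_some, hz]
    split_ifs <;> simp [List.take_modifyHead]

theorem trunc_unstrip (j p κ : ℕ) (x : Option Tup) :
    trunc j p (unstrip κ x) = unstrip κ (trunc j p x) := by
  cases x <;> simp [trunc, unstrip, List.take_modifyHead]

theorem trunc_ne_some_nil {j p : ℕ} (hn : 0 < j - p / 2) {x : Option Tup} (hx : x ≠ some []) :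
    trunc j p x ≠ some [] := by
  obtain ⟨n, hn⟩ := Nat.exists_eq_add_of_lt hn
  match x with
  | none => simp [trunc]
  | some (_ :: _) => simp [trunc, hn]

theorem NV_none_left (j p : ℕ) (y : Option Tup) : NV j p none y := by
  unfold NV
  split_ifs
  · exact wle_none _
  · cases y
    · exact .inr ⟨rfl, rfl⟩
    · exact .inl trivial

theorem NV_mono {j p : ℕ} {x x' y : Option Tup} (hx : wle x x') (h : NV j p x y) :
    NV j p x' y := by
  unfold NV at h ⊢
  split_ifs at h ⊢
  · exact wle_trans h (trunc_mono hx)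
  · exact h.imp (wlt_of_wlt_of_wle · (trunc_mono hx))
      fun ⟨hx', hy⟩ => ⟨eq_none_of_none_wle (hx' ▸ hx), hy⟩

theorem notLoose_iff {D : Set (Option Tup)} {j p : ℕ} {x y : Option Tup} :
    NotLoose D j p x y ↔ ∀ x' ∈ D, wlt x' x → ¬ NV j p x' y :=
  ⟨fun h => h.elim (fun hx _ _ hx' hNV => hx (NV_mono (wle_of_wlt hx') hNV)) id, .inr⟩

theorem NV_strip_iff {j p : ℕ} (hn : 0 < j - p / 2) {Y : Option Tup} (hY : Y ≠ some [])
    (κ : ℕ) (x : Option Tup) : NV j p x (strip κ Y) ↔ NV j p (unstrip κ x) Y := by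
  match x with
  | none => exact iff_of_true (NV_none_left ..) (NV_none_left ..)
  | some ξ =>
    unfold NV
    rw [trunc_strip hn, trunc_unstrip]
    split_ifs
    · exact strip_wle_iff (trunc_ne_some_nil hn hY) _
    · simpa [trunc, unstrip] using strip_wlt_iff (trunc_ne_some_nil hn hY) _

theorem none_mem_Dom (i j : ℕ) : none ∈ Dom i j := Set.mem_insert _ _

@[simp] theorem some_mem_Dom {i j : ℕ} {ξ : Tup} :
    some ξ ∈ Dom i j ↔ ξ ∈ LeafSet i j := by
  simp [Dom]

theorem ne_some_nil_of_mem_Dom {i j : ℕ} (hj : 0 < j) {x : Option Tup} (hx : x ∈ Dom i j) :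
    x ≠ some [] := by
  rintro rfl
  simp [LeafSet] at hx
  omega

theorem strip_mem_Dom {i₁ i₂ j : ℕ} {x : Option Tup} (hx : x ∈ Dom i₂ j) :
    strip (i₂ - i₁) x ∈ Dom i₁ j := by
  match x with
  | none => exact none_mem_Dom i₁ j
  | some ξ =>
    simp only [strip]
    split_ifs with hκ
    · match ξ with
      | [] => simpa [LeafSet] using hx
      | s :: ξ =>
        have := leadingZeros_le_length s
        simp_all [LeafSet, zcount_cons]
        omega
    · exact none_mem_Dom i₁ j

theorem unstrip_mem_Dom {i₁ i₂ j : ℕ} (h12 : i₁ ≤ i₂) {x : Option Tup}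
    (hx : x ∈ Dom i₁ j) :
    unstrip (i₂ - i₁) x ∈ Dom i₂ j := by
  match x with
  | none => exact none_mem_Dom i₂ j
  | some [] => simp_all [unstrip, LeafSet]; omega
  | some (s :: ξ) => simp_all [unstrip, LeafSet]; omega

theorem LeafSet_finite (i : ℕ) : ∀ j, (LeafSet i j).Finite
  | 0 => (Set.finite_singleton []).subset fun _ hξ => List.length_eq_zero_iff.1 hξ.1
  | j + 1 => ((List.finite_length_le Bool i).image2 (· :: ·) (LeafSet_finite i j)).subset <| by
      rintro (_ | ⟨s, ξ⟩) ⟨hlen, hsum⟩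
      · simp at hlen
      · simp only [List.length_cons, List.map_cons, List.sum_cons] at hlen hsum
        exact ⟨s, by simp; omega, ξ, ⟨by omega, by omega⟩, rfl⟩

theorem Dom_finite (i j : ℕ) : (Dom i j).Finite :=
  ((LeafSet_finite i j).image some).insert none

def nonViolating (i j p : ℕ) (y : Option Tup) : Set Label := {x | x ∈ Dom i j ∧ NV j p x y}

theorem exists_isLeast_nonViolating (i j p : ℕ) (y : Option Tup) :
    ∃ m, IsLeast (nonViolating i j p y) m := by
  obtain ⟨m, hm, hmin⟩ := Set.exists_min_image (nonViolating i j p y) id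
    ((Dom_finite i j).subset fun _ hx => hx.1) ⟨none, none_mem_Dom i j, NV_none_left j p y⟩
  exact ⟨m, hm, hmin⟩

theorem IsDrop.eq_min {i j p : ℕ} {a y d m : Option Tup} (hd : IsDrop i j p a y d)
    (ha : a ∈ Dom i j) (hm : IsLeast (nonViolating i j p y) m) :
    d = @min Label _ a m := by
  have hNL : ∀ x, NotLoose (Dom i j) j p x y ↔ wle x m := fun x =>
    notLoose_iff.trans (forall_lt_not_iff_le_of_isLeast hm)
  obtain ⟨hdD, hda, hdNL, hdmax⟩ := hd
  refine ((isGreatest_min (α := Label) ha hm.1.1).unique ?_).symm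
  exact ⟨⟨hdD, hda, (hNL d).1 hdNL⟩,
    fun x ⟨hx, hxa, hxm⟩ => hdmax x hx hxa ((hNL x).2 hxm)⟩

theorem stmt_16_general {V : Type*} (i₁ i₂ j : ℕ) (h12 : i₁ ≤ i₂)
    (π : V → ℕ)
    (ν₁ ν₂ : V → Option Tup)
    (hlab₂ : ∀ u, ν₂ u ∈ Dom i₂ j)
    (hrel : ∀ u, ν₁ u = strip (i₂ - i₁) (ν₂ u))
    (v w : V) (hp : π v < 2 * j)
    (d₁ d₂ : Option Tup)
    (h₁ : IsDrop i₁ j (π v) (ν₁ v) (ν₁ w) d₁)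
    (h₂ : IsDrop i₂ j (π v) (ν₂ v) (ν₂ w) d₂) :
    d₁ = strip (i₂ - i₁) d₂ := by
  have hn : 0 < j - π v / 2 := by omega
  have hproper : ∀ {x}, x ∈ Dom i₂ j → x ≠ some [] := ne_some_nil_of_mem_Dom (by omega)
  obtain ⟨m, hm⟩ := exists_isLeast_nonViolating i₂ j (π v) (ν₂ w)
  have hm₁ : IsLeast (nonViolating i₁ j (π v) (ν₁ w)) (strip (i₂ - i₁) m) := by
    rw [hrel w]
    exact hm.map_of_adjointOn (fun _ => strip_mem_Dom) (fun _ => unstrip_mem_Dom h12)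
      (fun _ hb => strip_wle_iff (hproper hb)) (NV_strip_iff hn (hproper (hlab₂ w)) _)
      (fun _ _ => NV_mono)
  have hν₁ : ν₁ v ∈ Dom i₁ j := hrel v ▸ strip_mem_Dom (hlab₂ v)
  rw [h₁.eq_min hν₁ hm₁, h₂.eq_min (hlab₂ v) hm, hrel v]
  exact ((strip_monotoneOn _).map_min (hproper (hlab₂ v)) (hproper hm.1.1)).symm

/-- Fix `i₁ ≤ i₂` and a height `j`, and let `ν₁, ν₂` be node labelings
into `L(T_{i₁,j}) ∪ {⊤}` resp. `L(T_{i₂,j}) ∪ {⊤}` with `ν₁(u) = ν₂(u)^{i₂-i₁}` for all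
`u`.  Then for any arc `vw` with `π(v) < 2j`,
`drop(ν₁, vw) = drop(ν₂, vw)^{i₂-i₁}`. -/
theorem stmt_16 {V : Type*} (i₁ i₂ j : ℕ) (h12 : i₁ ≤ i₂)
    (π : V → ℕ)
    (ν₁ ν₂ : V → Option Tup)
    (hlab₁ : ∀ u, ν₁ u ∈ Dom i₁ j) (hlab₂ : ∀ u, ν₂ u ∈ Dom i₂ j)
    (hrel : ∀ u, ν₁ u = strip (i₂ - i₁) (ν₂ u))
    (v w : V) (hp : π v < 2 * j)
    (d₁ d₂ : Option Tup)
    (h₁ : IsDrop i₁ j (π v) (ν₁ v) (ν₁ w) d₁)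
    (h₂ : IsDrop i₂ j (π v) (ν₂ v) (ν₂ w) d₂) :
    d₁ = strip (i₂ - i₁) d₂ :=
  stmt_16_general i₁ i₂ j h12 π ν₁ ν₂ hlab₂ hrel v w hp d₁ d₂ h₁ h₂
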